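/- arXiv:1810.05858 — 4 statements merged into one kernel-verified Lean document; each statement's English description precedes it below -/
import Mathlib

section
/- In the 5-node network of Example 1 (nodes 1..5; arcs (1,2),(2,3),(3,4) of cost 1, (1,3) of cost 3, (2,4) of cost 3, (1,4) of cost M, (1,5) of cost M, (5,4) of cost 0, with M > 5, source 1, sink 4): (a) the greedy evader's cumulative loss over T = 2 epochs against a greedy semi-oracle with A_0 = ∅ and k = 2 equals 3 + M; (b) the strategic evader traversing first {1→2→4} and then {1→3→4} incurs cumulative loss 8; hence the strategic policy strictly dominates the greedy policy whenever M > 5. -/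
open Finset

/-- Arc costs of the Example 1 network (nodes 1..5, source 1, sink 4). -/
noncomputable def ex1cost (M : ℝ) : ℕ × ℕ → ℝ := fun a =>
  if a = (1, 2) then 1 else if a = (2, 3) then 1 else if a = (3, 4) then 1
  else if a = (1, 3) then 3 else if a = (2, 4) then 3
  else if a = (1, 4) then M else if a = (1, 5) then M
  else 0  -- arc (5,4) has cost 0

/-- Cost of a path (set of arcs). -/
noncomputable def ex1l (M : ℝ) (P : Finset (ℕ × ℕ)) : ℝ := ∑ a ∈ P, ex1cost M a

/-- The 1-4 paths of the Example 1 network. -/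
def ex1Paths : Set (Finset (ℕ × ℕ)) :=
  { {(1,2), (2,3), (3,4)}, {(1,2), (2,4)}, {(1,3), (3,4)}, {(1,4)}, {(1,5), (5,4)} }

/-- The evader's second-epoch loss when the interdictor blocks `I`:
the min cost of a 1-4 path avoiding `I`. -/
noncomputable def ex1m (M : ℝ) (I : Finset (ℕ × ℕ)) : ℝ :=
  sInf (ex1l M '' {P | P ∈ ex1Paths ∧ Disjoint P I})

lemma l1 (M : ℝ) : ex1l M {(1,2), (2,3), (3,4)} = 3 := by
  simp [ex1l, ex1cost, Finset.sum_insert, Prod.ext_iff]; norm_num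

lemma l2 (M : ℝ) : ex1l M {(1,2), (2,4)} = 4 := by
  simp [ex1l, ex1cost, Finset.sum_insert, Prod.ext_iff]; norm_num

lemma l3 (M : ℝ) : ex1l M {(1,3), (3,4)} = 4 := by
  simp [ex1l, ex1cost, Finset.sum_insert, Prod.ext_iff]; norm_num

lemma l4 (M : ℝ) : ex1l M {(1,4)} = M := by
  simp [ex1l, ex1cost, Prod.ext_iff]

lemma l5 (M : ℝ) : ex1l M {(1,5), (5,4)} = M := by
  simp [ex1l, ex1cost, Finset.sum_insert, Prod.ext_iff]

lemma lb (M : ℝ) (hM : 5 < M) :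
    BddBelow (ex1l M '' {P | P ∈ ex1Paths ∧ Disjoint P I}) := by
  refine ⟨3, ?_⟩
  rintro x ⟨P, ⟨hP, -⟩, rfl⟩
  rcases hP with h | h | h | h | h <;> subst h <;>
    simp only [l1, l2, l3, l4, l5] <;> linarith

/-- Example 1: with `T = 2`, `k = 2`, `A_0 = ∅`, `M > 5`:
(a) the greedy evader first takes the shortest path `{1→2→3→4}` (cost 3,
so `A_1` is that path) and the semi-oracle's blocking set — any
`I ⊆ {(1,2),(2,3),(3,4)}`, `|I| ≤ 2`, maximizing the evader's second-epoch
loss — yields cumulative greedy loss `3 + M`;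
(b) the strategic evader traversing `{1→2→4}` then `{1→3→4}` is feasible
against any blocking set `I ⊆ {1→2→4}` and incurs cumulative loss `8`;
hence the strategic policy strictly dominates the greedy one since `M > 5`. -/
theorem stmt11 (M : ℝ) (hM : 5 < M) :
    (∀ I : Finset (ℕ × ℕ), I ⊆ {(1,2), (2,3), (3,4)} → I.card ≤ 2 →
      (∀ I' : Finset (ℕ × ℕ), I' ⊆ {(1,2), (2,3), (3,4)} → I'.card ≤ 2 →
        ex1m M I' ≤ ex1m M I) →
      ex1l M {(1,2), (2,3), (3,4)} + ex1m M I = 3 + M) ∧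
    ((∀ I : Finset (ℕ × ℕ), I ⊆ ({(1,2), (2,4)} : Finset (ℕ × ℕ)) →
        Disjoint ({(1,3), (3,4)} : Finset (ℕ × ℕ)) I) ∧
      ex1l M {(1,2), (2,4)} + ex1l M {(1,3), (3,4)} = 8) ∧
    ex1l M {(1,2), (2,4)} + ex1l M {(1,3), (3,4)} < 3 + M := by
  have hub : ∀ I : Finset (ℕ × ℕ), I ⊆ {(1,2), (2,3), (3,4)} → ex1m M I ≤ M := by
    intro I hI
    have h14 : ({(1,4)} : Finset (ℕ × ℕ)) ∈ ex1Paths := by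
      simp [ex1Paths]
    have hd : Disjoint ({(1,4)} : Finset (ℕ × ℕ)) I := by
      rw [Finset.disjoint_left]
      intro a ha hai
      have := hI hai
      simp at ha
      subst ha
      simp [Finset.mem_insert, Prod.ext_iff] at this
    have : M ∈ ex1l M '' {P | P ∈ ex1Paths ∧ Disjoint P I} :=
      ⟨{(1,4)}, ⟨h14, hd⟩, l4 M⟩
    exact csInf_le (lb M hM) this
  have hopt : ex1m M {(1,2),(3,4)} = M := by
    have hset : {P | P ∈ ex1Paths ∧ Disjoint P ({(1,2),(3,4)} : Finset (ℕ × ℕ))}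
        = {({(1,4)} : Finset (ℕ × ℕ)), {(1,5),(5,4)}} := by
      ext P
      simp only [Set.mem_setOf_eq, ex1Paths, Set.mem_insert_iff, Set.mem_singleton_iff]
      constructor
      · rintro ⟨h | h | h | h | h, hd⟩ <;> subst h <;>
          first
          | (exfalso; rw [Finset.disjoint_left] at hd;
             exact hd (by decide) (by decide))
          | tauto
      · rintro (h | h) <;> subst h <;> exact ⟨by simp [ex1Paths], by decide⟩
    unfold ex1m
    rw [hset]
    rw [Set.image_insert_eq, Set.image_singleton, l4, l5]
    simp
  refine ⟨?_, ⟨?_, ?_⟩, ?_⟩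
  · intro I hI hcard hmax
    have h1 : ex1m M I ≤ M := hub I hI
    have h2 : M ≤ ex1m M I := by
      have := hmax {(1,2),(3,4)} (by intro a ha; fin_cases ha <;> decide) (by decide)
      rwa [hopt] at this
    rw [l1, le_antisymm h1 h2]
  · intro I hI
    rw [Finset.disjoint_left]
    intro a ha hai
    have := hI hai
    fin_cases ha <;> simp_all
  · rw [l2, l3]; norm_num
  · rw [l2, l3]; linarith
end

section
/- In the chain network of Example 4 with n nodes (each consecutive pair (i, i+1), i = 1..n−1, joined by one arc of cost 0 and one parallel arc of cost M > 0), with T = 2, A_0 = ∅ and k = 2: (a) the greedy evader's cumulative loss is 0 + 2M = 2M (the interdictor blocks two zero-cost arcs at t = 2, forcing the evader to use exactly two cost-M arcs); (b) every pair of arc-disjoint s-f paths has total cost (n−1)·M; hence the ratio of any arc-disjoint evasion solution's cost to the greedy loss is (n−1)/2 and thus unbounded in the number of arcs. -/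
open Finset

/-- s-f paths of the Example 4 chain network with `n` nodes: positions
`0, …, n-2` each carry two parallel arcs `(i, false)` (cost 0) and
`(i, true)` (cost `M`); a path picks exactly one arc at each position. -/
def ex4IsPath (n : ℕ) (P : Finset (ℕ × Bool)) : Prop :=
  (∀ a ∈ P, a.1 < n - 1) ∧
    ∀ i < n - 1, ((i, false) ∈ P ∧ (i, true) ∉ P) ∨
      ((i, true) ∈ P ∧ (i, false) ∉ P)

noncomputable def ex4cost (M : ℝ) (a : ℕ × Bool) : ℝ := if a.2 then M else 0

noncomputable def ex4l (M : ℝ) (P : Finset (ℕ × Bool)) : ℝ := ∑ a ∈ P, ex4cost M a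

/-- Second-epoch loss when the interdictor blocks `I`. -/
noncomputable def ex4m (n : ℕ) (M : ℝ) (I : Finset (ℕ × Bool)) : ℝ :=
  sInf (ex4l M '' {P | ex4IsPath n P ∧ Disjoint P I})

-- aux
def pathOf (n : ℕ) (f : ℕ → Bool) : Finset (ℕ × Bool) :=
  (Finset.range (n-1)).image (fun i => (i, f i))

lemma mem_pathOf {n : ℕ} {f : ℕ → Bool} {i : ℕ} {b : Bool} :
    (i, b) ∈ pathOf n f ↔ i < n - 1 ∧ b = f i := by
  simp only [pathOf, mem_image, mem_range, Prod.mk.injEq]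
  constructor
  · rintro ⟨j, hj, rfl, rfl⟩; exact ⟨hj, rfl⟩
  · rintro ⟨hi, rfl⟩; exact ⟨i, hi, rfl, rfl⟩

lemma pathOf_isPath {n : ℕ} (f : ℕ → Bool) : ex4IsPath n (pathOf n f) := by
  constructor
  · rintro ⟨i, b⟩ ha; exact (mem_pathOf.1 ha).1
  · intro i hi
    cases hfi : f i with
    | false => exact Or.inl ⟨mem_pathOf.2 ⟨hi, hfi.symm⟩,
        fun h => by simpa [hfi] using (mem_pathOf.1 h).2⟩
    | true => exact Or.inr ⟨mem_pathOf.2 ⟨hi, hfi.symm⟩,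
        fun h => by simpa [hfi] using (mem_pathOf.1 h).2⟩

lemma cost_nonneg {M : ℝ} (hM : 0 ≤ M) (a : ℕ × Bool) : 0 ≤ ex4cost M a := by
  unfold ex4cost; split <;> simp [hM]

lemma l_nonneg {M : ℝ} (hM : 0 ≤ M) (P : Finset (ℕ × Bool)) : 0 ≤ ex4l M P :=
  Finset.sum_nonneg fun a _ => cost_nonneg hM a

lemma l_pathOf {n : ℕ} {M : ℝ} (f : ℕ → Bool) :
    ex4l M (pathOf n f) = ∑ i ∈ Finset.range (n-1), ex4cost M (i, f i) := by
  unfold ex4l pathOf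
  rw [Finset.sum_image]
  intro x _ y _ h
  exact congrArg Prod.fst h

/-- Example 4: chain of `n` nodes, `T = 2`, `A_0 = ∅`, `k = 2`,
`M > 0`.  (a) The greedy evader's first path is the all-zero-cost path `P1`
(so `A_1 = P1`), and for any semi-oracle blocking set `I ⊆ P1`, `|I| ≤ 2`,
maximizing the second-epoch loss, the greedy cumulative loss equals
`0 + 2M = 2M`;  (b) every pair of arc-disjoint s-f paths has total cost
`(n-1)·M`;  hence the ratio of any arc-disjoint evasion solution's cost to the
greedy loss is `(n-1)/2` — unbounded in the number of arcs. -/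
theorem stmt13 (n : ℕ) (hn : 3 ≤ n) (M : ℝ) (hM : 0 < M) :
    (∀ I : Finset (ℕ × Bool),
      I ⊆ (Finset.range (n - 1)).image (fun i => (i, false)) → I.card ≤ 2 →
      (∀ I' : Finset (ℕ × Bool),
        I' ⊆ (Finset.range (n - 1)).image (fun i => (i, false)) → I'.card ≤ 2 →
        ex4m n M I' ≤ ex4m n M I) →
      ex4l M ((Finset.range (n - 1)).image (fun i => (i, false))) + ex4m n M I
        = 2 * M) ∧
    (∀ P Q : Finset (ℕ × Bool), ex4IsPath n P → ex4IsPath n Q → Disjoint P Q →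
      ex4l M P + ex4l M Q = ((n : ℝ) - 1) * M) ∧
    ((n : ℝ) - 1) * M / (2 * M) = ((n : ℝ) - 1) / 2 := by
  have h2 : 2 ≤ n - 1 := by omega
  refine ⟨?_, ?_, ?_⟩
  · intro I hI hIcard hmax
    have hP1 : ex4l M ((Finset.range (n - 1)).image (fun i => (i, false))) = 0 := by
      rw [show ((Finset.range (n - 1)).image (fun i => (i, false))) = pathOf n (fun _ => false) from rfl,
        l_pathOf]
      simp [ex4cost]
    rw [hP1, zero_add]
    -- the special blocking set
    set I0 : Finset (ℕ × Bool) := {(0, false), (1, false)} with hI0def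
    have hI0sub : I0 ⊆ (Finset.range (n - 1)).image (fun i => (i, false)) := by
      intro a ha
      simp only [hI0def, mem_insert, mem_singleton] at ha
      rcases ha with rfl | rfl <;> simp [mem_image] <;> omega
    have hI0card : I0.card ≤ 2 := by
      apply le_trans (Finset.card_insert_le _ _); simp
    have hbdd : BddBelow (ex4l M '' {P | ex4IsPath n P ∧ Disjoint P I}) := by
      refine ⟨0, ?_⟩
      rintro x ⟨P, _, rfl⟩
      exact l_nonneg hM.le P
    -- upper bound: path avoiding I has cost ≤ 2M
    have hub : ex4m n M I ≤ 2 * M := by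
      set f : ℕ → Bool := fun i => decide ((i, false) ∈ I) with hf
      have hdisj : Disjoint (pathOf n f) I := by
        rw [Finset.disjoint_left]
        rintro ⟨i, b⟩ hmem hin
        have hb : b = false := by
          have := hI hin
          simp only [mem_image, mem_range, Prod.mk.injEq] at this
          obtain ⟨j, _, _, h⟩ := this; exact h.symm
        subst hb
        have : (false : Bool) = f i := (mem_pathOf.1 hmem).2
        rw [hf] at this
        simp only [decide_eq_false_iff_not] at this
        exact (by simpa using this.symm : ¬ _) hin
      have hmemS : ex4l M (pathOf n f) ∈ ex4l M '' {P | ex4IsPath n P ∧ Disjoint P I} :=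
        ⟨pathOf n f, ⟨pathOf_isPath f, hdisj⟩, rfl⟩
      refine le_trans (csInf_le hbdd hmemS) ?_
      rw [l_pathOf]
      have hsum : ∑ i ∈ Finset.range (n-1), ex4cost M (i, f i)
          = ∑ i ∈ (Finset.range (n-1)).filter (fun i => (i, false) ∈ I), M := by
        rw [Finset.sum_filter]
        refine Finset.sum_congr rfl fun i _ => ?_
        by_cases h : (i, false) ∈ I <;> simp [ex4cost, hf, h]
      rw [hsum, Finset.sum_const, nsmul_eq_mul]
      have hcard : ((Finset.range (n-1)).filter (fun i => (i, false) ∈ I)).card ≤ 2 := by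
        refine le_trans ?_ hIcard
        apply Finset.card_le_card_of_injOn (fun i => (i, false))
        · intro i hi; exact (Finset.mem_filter.1 hi).2
        · intro a _ b _ h; exact congrArg Prod.fst h
      have : (((Finset.range (n-1)).filter (fun i => (i, false) ∈ I)).card : ℝ) ≤ 2 := by
        exact_mod_cast hcard
      nlinarith
    -- lower bound: ex4m I0 ≥ 2M
    have hlb0 : 2 * M ≤ ex4m n M I0 := by
      apply le_csInf
      · refine ⟨ex4l M (pathOf n (fun _ => true)), pathOf n (fun _ => true),
          ⟨pathOf_isPath _, ?_⟩, rfl⟩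
        rw [Finset.disjoint_left]
        rintro ⟨i, b⟩ hmem hin
        have : b = true := (mem_pathOf.1 hmem).2
        subst this
        simp [hI0def] at hin
      · rintro x ⟨P, ⟨hPpath, hPdisj⟩, rfl⟩
        have h0 : (0, true) ∈ P := by
          rcases hPpath.2 0 (by omega) with ⟨h, _⟩ | ⟨h, _⟩
          · exact absurd (Finset.disjoint_left.1 hPdisj h) (by simp [hI0def])
          · exact h
        have h1 : (1, true) ∈ P := by
          rcases hPpath.2 1 (by omega) with ⟨h, _⟩ | ⟨h, _⟩
          · exact absurd (Finset.disjoint_left.1 hPdisj h) (by simp [hI0def])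
          · exact h
        have hsub : ({(0, true), (1, true)} : Finset (ℕ × Bool)) ⊆ P := by
          intro a ha
          simp only [mem_insert, mem_singleton] at ha
          rcases ha with rfl | rfl
          exacts [h0, h1]
        calc 2 * M = ∑ a ∈ ({(0, true), (1, true)} : Finset (ℕ × Bool)), ex4cost M a := by
              rw [Finset.sum_pair (by simp)]; simp [ex4cost]; ring
          _ ≤ ex4l M P :=
              Finset.sum_le_sum_of_subset_of_nonneg hsub fun a _ _ => cost_nonneg hM.le a
    have hlb : 2 * M ≤ ex4m n M I := le_trans hlb0 (hmax I0 hI0sub hI0card)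
    linarith
  · intro P Q hP hQ hPQ
    have hunion : P ∪ Q = (Finset.range (n-1)) ×ˢ (Finset.univ : Finset Bool) := by
      ext ⟨i, b⟩
      simp only [Finset.mem_union, Finset.mem_product, Finset.mem_range, Finset.mem_univ,
        and_true]
      constructor
      · rintro (h | h)
        · exact hP.1 _ h
        · exact hQ.1 _ h
      · intro hi
        rcases hP.2 i hi with ⟨hPf, hPt⟩ | ⟨hPt, hPf⟩ <;>
          rcases hQ.2 i hi with ⟨hQf, hQt⟩ | ⟨hQt, hQf⟩
        · exact absurd (Finset.disjoint_left.1 hPQ hPf) (by simp [hQf])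
        · cases b
          exacts [Or.inl hPf, Or.inr hQt]
        · cases b
          exacts [Or.inr hQf, Or.inl hPt]
        · exact absurd (Finset.disjoint_left.1 hPQ hPt) (by simp [hQt])
    have := Finset.sum_union (f := ex4cost M) hPQ
    show ex4l M P + ex4l M Q = _
    unfold ex4l
    rw [← this, hunion, Finset.sum_product]
    have : ∀ i ∈ Finset.range (n-1), (∑ b : Bool, ex4cost M (i, b)) = M := by
      intro i _; simp [ex4cost]
    rw [Finset.sum_congr rfl this, Finset.sum_const, nsmul_eq_mul]
    congr 1
    have : ((n : ℝ) - 1) = ((n - 1 : ℕ) : ℝ) := by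
      rw [Nat.cast_sub (by omega)]; simp
    rw [this]
    simp
  · rw [mul_div_mul_right _ _ (ne_of_gt hM)]
end

section
/- In the 3-SAT reduction graph of Theorem 1, if the boolean formula F = F_1 ∧ … ∧ F_m over n variables is satisfiable by assignment τ, then there exist two arc-disjoint s-f paths P_1 and P_2 such that P_1 traverses exactly one side (upper or lower) of each variable lobe according to τ and has cost 3m + n, while P_2 traverses the clause arcs (s,y_1), (z_j, y_{j+1}) for j < m, (z_m, f) and, for each clause, a satisfied-literal subpath, and has cost 0; their total cost is 3m + n. -/
/-!
`P_1` walks through every lobe along the side opposite to the literal of `x_i` made true by `τ`,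
and `P_2` walks along the clause chain `s → y_1 → ⋯ → z_m → f`, visiting in each clause the
segment of a literal made true by `τ`. That segment lies on the other side of its lobe, so every
arc of `P_2` touches a clause node or a segment avoided by `P_1`: the paths are arc-disjoint.
In `P_1` every occurrence is entered by a unit-cost arc and every lobe is left by one, so its cost
is `3m + n`; all arcs of `P_2` are free.
-/

/-- Nodes of the 3-SAT reduction graph of Theorem 1: `w 0 = s`, …,
`w n = f` separate the `n` variable lobes; `u j t b` / `v j t b` are the
endpoints of the segment of the occurrence (clause `j`, slot `t`) on side `b`
of its lobe (side `true` = upper/positive-literal side, side `false` =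
lower/negated-literal side); `y j`, `z j` are the clause nodes. -/
inductive RNode (n m : ℕ) : Type
  | w : Fin (n + 1) → RNode n m
  | u : Fin m → Fin 3 → Bool → RNode n m
  | v : Fin m → Fin 3 → Bool → RNode n m
  | y : Fin m → RNode n m
  | z : Fin m → RNode n m
  deriving DecidableEq

/-- The occurrences (clause, slot) of variable `i`, in a fixed order. -/
def occList {n m : ℕ} (Cl : Fin m → Fin 3 → Fin n × Bool) (i : Fin n) :
    List (Fin m × Fin 3) :=
  ((List.finRange m).flatMap fun j => (List.finRange 3).map fun t => (j, t)).filter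
    fun p => decide ((Cl p.1 p.2).1 = i)

/-- Arcs of the reduction graph: each lobe `i` chains, on each of its two
sides, the segments of the occurrences of variable `i` from `w i` to
`w (i+1)`; the clause chain `s → y 0 → … → z (m-1) → f` with connectors from
`y j` to (and from `v` back to `z j` of) the occurrence segment lying on the
side matching the literal's polarity `(Cl j t).2`. -/
inductive RArc {n m : ℕ} (Cl : Fin m → Fin 3 → Fin n × Bool) :
    RNode n m → RNode n m → Prop
  | entry (i : Fin n) (side : Bool) (j : Fin m) (t : Fin 3)
      (h : (occList Cl i).head? = some (j, t)) :
      RArc Cl (.w i.castSucc) (.u j t side)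
  | seg (j : Fin m) (t : Fin 3) (side : Bool) :
      RArc Cl (.u j t side) (.v j t side)
  | chain (i : Fin n) (side : Bool) (j : Fin m) (t : Fin 3) (j' : Fin m)
      (t' : Fin 3) (q : ℕ) (h1 : (occList Cl i)[q]? = some (j, t))
      (h2 : (occList Cl i)[q + 1]? = some (j', t')) :
      RArc Cl (.v j t side) (.u j' t' side)
  | exits (i : Fin n) (side : Bool) (j : Fin m) (t : Fin 3)
      (h : (occList Cl i).getLast? = some (j, t)) :
      RArc Cl (.v j t side) (.w i.succ)
  | sy (j : Fin m) (h : (j : ℕ) = 0) : RArc Cl (.w 0) (.y j)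
  | zy (j j' : Fin m) (h : (j' : ℕ) = (j : ℕ) + 1) : RArc Cl (.z j) (.y j')
  | zf (j : Fin m) (h : (j : ℕ) = m - 1) : RArc Cl (.z j) (.w (Fin.last n))
  | yu (j : Fin m) (t : Fin 3) : RArc Cl (.y j) (.u j t (Cl j t).2)
  | vz (j : Fin m) (t : Fin 3) : RArc Cl (.v j t (Cl j t).2) (.z j)

/-- Arc costs: the lobe-structure arcs `w→u`, `v→u`, `v→w` cost 1; all other
arcs (segments, clause chain and connectors) cost 0. -/
def rcost {n m : ℕ} : RNode n m × RNode n m → ℕ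
  | (.w _, .u _ _ _) => 1
  | (.v _ _ _, .u _ _ _) => 1
  | (.v _ _ _, .w _) => 1
  | _ => 0

/-- The arcs traversed by a path given as a list of nodes. -/
def pathArcs {n m : ℕ} (L : List (RNode n m)) : List (RNode n m × RNode n m) :=
  L.zip L.tail

def rPathCost {n m : ℕ} (L : List (RNode n m)) : ℕ :=
  ((pathArcs L).map rcost).sum

/-- A simple directed path from `s = w 0` to `f = w n`. -/
def IsSFPath {n m : ℕ} (Cl : Fin m → Fin 3 → Fin n × Bool)
    (L : List (RNode n m)) : Prop :=
  List.Chain' (RArc Cl) L ∧ L.head? = some (.w 0) ∧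
    L.getLast? = some (.w (Fin.last n)) ∧ L.Nodup

namespace List

variable {α : Type*}

theorem isChain_iff_forall_mem_zip_tail {R : α → α → Prop} {l : List α} :
    IsChain R l ↔ ∀ a b, (a, b) ∈ l.zip l.tail → R a b := by
  induction l with
  | nil => simp
  | cons a l ih =>
    cases l with
    | nil => simp
    | cons b l => simp_all [isChain_cons_cons, or_imp, forall_and]

theorem zip_tail_append {l r : List α} {b : α} (h : r.head? = some b) :
    (l ++ r).zip (l ++ r).tail = (l ++ [b]).zip (l ++ [b]).tail ++ r.zip r.tail := by
  obtain ⟨r, rfl⟩ : ∃ r', r = b :: r' := by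
    cases r with
    | nil => simp at h
    | cons c r => exact ⟨r, by simpa using h⟩
  induction l with
  | nil => rfl
  | cons a l ih =>
    cases l with
    | nil => rfl
    | cons a' l => simpa using ih

theorem zip_tail_concat {l : List α} {a : α} (h : l.getLast? = some a) (x : α) :
    (l ++ [x]).zip (l ++ [x]).tail = l.zip l.tail ++ [(a, x)] := by
  obtain ⟨l, rfl⟩ := getLast?_eq_some_iff.1 h
  rw [append_assoc, singleton_append, zip_tail_append (b := a) rfl]
  rfl

/-- `weave g f = g 0 :: f 0 ++ g 1 :: f 1 ++ ⋯ ++ g (k - 1) :: f (k - 1) ++ [g k]`. -/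
def weave : {k : ℕ} → (Fin (k + 1) → α) → (Fin k → List α) → List α
  | 0, g, _ => [g 0]
  | _ + 1, g, f => g 0 :: f 0 ++ weave (fun i => g i.succ) (fun i => f i.succ)

section weave

variable {k : ℕ} (g : Fin (k + 1) → α) (f : Fin k → List α)

theorem head?_weave : (weave g f).head? = some (g 0) := by
  cases k <;> rfl

theorem getLast?_weave : (weave g f).getLast? = some (g (Fin.last k)) := by
  induction k with
  | zero => rfl
  | succ k ih => rw [weave, getLast?_append, ih]; simp

theorem mem_weave {x : α} : x ∈ weave g f ↔ (∃ i, g i = x) ∨ ∃ i, x ∈ f i := by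
  induction k with
  | zero => simp [weave, eq_comm, Fin.exists_fin_one]
  | succ k ih => simp [weave, ih, Fin.exists_fin_succ, or_assoc, or_left_comm, eq_comm]

theorem nodup_weave (hg : Function.Injective g) (hf : ∀ i, (f i).Nodup)
    (hdisj : _root_.Pairwise fun i j => (f i).Disjoint (f j)) (hgf : ∀ i j, g i ∉ f j) :
    (weave g f).Nodup := by
  induction k with
  | zero => simp [weave]
  | succ k ih =>
    rw [weave, cons_append, nodup_cons, nodup_append, mem_append, mem_weave]
    refine ⟨?_, hf 0, ih _ _ (hg.comp (Fin.succ_injective _)) (fun i => hf _)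
      (fun i j hij => hdisj ((Fin.succ_injective _).ne hij)) (fun i j => hgf _ _), ?_⟩
    · rintro (h | ⟨i, hi⟩ | ⟨i, hi⟩)
      · exact hgf 0 0 h
      · exact Fin.succ_ne_zero i (hg hi)
      · exact hgf 0 _ hi
    · intro x hx y hy hxy
      subst hxy
      rcases (mem_weave _ _).1 hy with ⟨i, rfl⟩ | ⟨i, hi⟩
      · exact hgf _ 0 hx
      · exact hdisj (Fin.succ_ne_zero i).symm hx hi

theorem zip_tail_weave :
    (weave g f).zip (weave g f).tail =
      (finRange k).flatMap fun i =>
        (g i.castSucc :: f i ++ [g i.succ]).zip (g i.castSucc :: f i ++ [g i.succ]).tail := by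
  induction k with
  | zero => rfl
  | succ k ih =>
    rw [weave, zip_tail_append (head?_weave _ _), ih, finRange_succ,
      flatMap_cons, flatMap_map]
    simp only [Fin.succ_castSucc, Fin.castSucc_zero, Fin.succ_zero_eq_one]

theorem isChain_weave {R : α → α → Prop}
    (h : ∀ i, IsChain R (g i.castSucc :: f i ++ [g i.succ])) : IsChain R (weave g f) := by
  rw [isChain_iff_forall_mem_zip_tail, zip_tail_weave]
  intro a b hab
  obtain ⟨i, -, hi⟩ := mem_flatMap.1 hab
  exact isChain_iff_forall_mem_zip_tail.1 (h i) a b hi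

end weave

end List

namespace ReductionGraph

open List

variable {n m : ℕ} {Cl : Fin m → Fin 3 → Fin n × Bool}

theorem mem_occList {i : Fin n} {p : Fin m × Fin 3} :
    p ∈ occList Cl i ↔ (Cl p.1 p.2).1 = i := by
  simp [occList]

variable (Cl) in
theorem nodup_occList (i : Fin n) : (occList Cl i).Nodup := by
  refine Nodup.filter _ (nodup_flatMap.2 ⟨fun j _ => (nodup_finRange 3).map ?_, ?_⟩)
  · exact fun t t' h => congrArg Prod.snd h
  · refine (nodup_finRange m).pairwise_of_forall_ne fun j _ j' _ hjj' p hp hp' => hjj' ?_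
    simp only [mem_map] at hp hp'
    obtain ⟨t, -, rfl⟩ := hp
    obtain ⟨t', -, h⟩ := hp'
    exact (congrArg Prod.fst h).symm

theorem occList_ne_nil (hocc : ∀ i : Fin n, ∃ j t, (Cl j t).1 = i) (i : Fin n) :
    occList Cl i ≠ [] := by
  obtain ⟨j, t, h⟩ := hocc i
  exact ne_nil_of_mem ((mem_occList (p := (j, t))).2 h)

variable (Cl) in
theorem sum_length_occList : ∑ i, (occList Cl i).length = 3 * m := by
  classical
  have hcard (i : Fin n) : (occList Cl i).length =
      (Finset.univ.filter fun p : Fin m × Fin 3 => (Cl p.1 p.2).1 = i).card := by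
    rw [← toFinset_card_of_nodup (nodup_occList Cl i)]
    congr 1
    ext p
    simp [mem_occList]
  simp_rw [hcard]
  rw [← Finset.card_eq_sum_card_fiberwise (fun _ _ => Finset.mem_coe.2 (Finset.mem_univ _))]
  simp [mul_comm]

variable (Cl) in
def lobeSide (b : Bool) (i : Fin n) : List (RNode n m) :=
  (occList Cl i).flatMap fun p => [.u p.1 p.2 b, .v p.1 p.2 b]

theorem mem_lobeSide {b : Bool} {i : Fin n} {x : RNode n m} :
    x ∈ lobeSide Cl b i ↔ ∃ j t, (Cl j t).1 = i ∧ (x = .u j t b ∨ x = .v j t b) := by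
  simp [lobeSide, mem_occList]

theorem nodup_lobeSide (b : Bool) (i : Fin n) : (lobeSide Cl b i).Nodup := by
  refine nodup_flatMap.2 ⟨fun p _ => by simp, ?_⟩
  refine (nodup_occList Cl i).pairwise_of_forall_ne fun p _ p' _ hpp' => ?_
  simp [Function.onFun, Prod.ext_iff] at hpp' ⊢
  exact fun h1 h2 => hpp' h1.symm h2.symm

theorem head?_lobeSide (b : Bool) (i : Fin n) :
    (lobeSide Cl b i).head? = (occList Cl i).head?.map fun p => .u p.1 p.2 b := by
  cases h : occList Cl i <;> simp [lobeSide, h]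

theorem getLast?_lobeSide (b : Bool) (i : Fin n) :
    (lobeSide Cl b i).getLast? = (occList Cl i).getLast?.map fun p => .v p.1 p.2 b := by
  rcases eq_nil_or_concat (occList Cl i) with h | ⟨l, p, h⟩ <;> simp [lobeSide, h]

theorem isChain_lobeSide (b : Bool) (i : Fin n) : List.IsChain (RArc Cl) (lobeSide Cl b i) := by
  rw [lobeSide, flatMap_def, isChain_flatten (by simp), isChain_map]
  refine ⟨?_, isChain_iff_getElem.2 fun q hq => ?_⟩
  · simp only [mem_map]
    rintro _ ⟨p, -, rfl⟩
    simpa using RArc.seg p.1 p.2 b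
  · simpa using RArc.chain i b _ _ _ _ q (getElem?_eq_getElem (Nat.lt_of_succ_lt hq))
      (getElem?_eq_getElem hq)

theorem isChain_lobeSegment {b : Bool} {i : Fin n} (hne : occList Cl i ≠ []) :
    List.IsChain (RArc Cl) (.w i.castSucc :: lobeSide Cl b i ++ [.w i.succ]) := by
  obtain ⟨p, hp⟩ := Option.ne_none_iff_exists'.1 (mt head?_eq_none_iff.1 hne)
  obtain ⟨q, hq⟩ := Option.ne_none_iff_exists'.1 (mt getLast?_eq_none_iff.1 hne)
  rw [cons_append, isChain_cons, isChain_append, head?_append, head?_lobeSide, hp,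
    getLast?_lobeSide, hq]
  refine ⟨?_, isChain_lobeSide b i, isChain_singleton _, ?_⟩
  · simpa using RArc.entry i b p.1 p.2 hp
  · simpa using RArc.exits i b q.1 q.2 hq

theorem rPathCost_cons_cons (a b : RNode n m) (l : List (RNode n m)) :
    rPathCost (a :: b :: l) = rcost (a, b) + rPathCost (b :: l) := by
  simp [rPathCost, pathArcs]

theorem rPathCost_weave {k : ℕ} (g : Fin (k + 1) → RNode n m) (f : Fin k → List (RNode n m)) :
    rPathCost (weave g f) = ∑ i, rPathCost (g i.castSucc :: f i ++ [g i.succ]) := by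
  rw [rPathCost, pathArcs, zip_tail_weave, map_flatMap, flatMap_def, sum_flatten, map_map,
    Fin.sum_univ_def]
  rfl

/-- Every occurrence but the first is entered by a unit arc `v → u`, the first by `a → u`, and
the last is left by `v → x`. -/
theorem rPathCost_cons_lobe_append (b : Bool) {a x : RNode n m}
    (ha : ∀ j t, rcost (a, .u j t b) = 1) (hx : ∀ j t, rcost (.v j t b, x) = 1)
    (p : Fin m × Fin 3) (O : List (Fin m × Fin 3)) :
    rPathCost (a :: (p :: O).flatMap (fun p => [.u p.1 p.2 b, .v p.1 p.2 b]) ++ [x]) =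
      O.length + 2 := by
  induction O generalizing a p with
  | nil =>
    simp only [flatMap_cons, flatMap_nil, append_nil, cons_append, nil_append,
      rPathCost_cons_cons, ha, hx]
    rfl
  | cons p' O ih =>
    have := ih (a := .v p.1 p.2 b) (fun _ _ => rfl) p'
    simp only [flatMap_cons, cons_append, nil_append, rPathCost_cons_cons] at this ⊢
    rw [this, ha]
    simp [rcost]
    omega

variable (Cl) in
/-- The path `P_1`. -/
def lobePath (τ : Fin n → Bool) : List (RNode n m) :=
  weave RNode.w fun i => lobeSide Cl (!τ i) i

theorem mem_lobePath (τ : Fin n → Bool) {x : RNode n m} :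
    x ∈ lobePath Cl τ ↔ (∃ i, x = .w i) ∨
      ∃ j t, x = .u j t (!τ (Cl j t).1) ∨ x = .v j t (!τ (Cl j t).1) := by
  simp [lobePath, mem_weave, mem_lobeSide, @eq_comm _ (RNode.w _)]

theorem rPathCost_lobePath (hocc : ∀ i : Fin n, ∃ j t, (Cl j t).1 = i) (τ : Fin n → Bool) :
    rPathCost (lobePath Cl τ) = 3 * m + n := by
  have hlobe (i : Fin n) : rPathCost (.w i.castSucc :: lobeSide Cl (!τ i) i ++ [.w i.succ]) =
      (occList Cl i).length + 1 := by
    obtain ⟨p, O, hO⟩ := exists_cons_of_ne_nil (occList_ne_nil hocc i)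
    rw [lobeSide, hO, rPathCost_cons_lobe_append _ (fun _ _ => rfl) (fun _ _ => rfl)]
    simp
  rw [lobePath, rPathCost_weave, Finset.sum_congr rfl fun i _ => hlobe i, Finset.sum_add_distrib,
    sum_length_occList]
  simp

theorem isSFPath_lobePath (hocc : ∀ i : Fin n, ∃ j t, (Cl j t).1 = i) (τ : Fin n → Bool) :
    IsSFPath Cl (lobePath Cl τ) := by
  refine ⟨isChain_weave _ _ fun i => isChain_lobeSegment (occList_ne_nil hocc i),
    head?_weave _ _, getLast?_weave _ _, nodup_weave _ _ (fun _ _ h => RNode.w.inj h)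
      (fun i => nodup_lobeSide _ i) ?_ ?_⟩
  · intro i i' hii' x hx hx'
    obtain ⟨j, t, rfl, hx⟩ := mem_lobeSide.1 hx
    obtain ⟨j', t', rfl, hx'⟩ := mem_lobeSide.1 hx'
    apply hii'
    rcases hx with rfl | rfl <;> rcases hx' with h | h <;>
      simp only [RNode.u.injEq, RNode.v.injEq, reduceCtorEq] at h <;> rw [h.1, h.2.1]
  · intro i i' h
    obtain ⟨j, t, -, h | h⟩ := mem_lobeSide.1 h <;> cases h

variable (Cl) in
/-- The path `P_2`, through the literal `sel j` of each clause `j`; its weave separators are `s`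
and the nodes `z j`. -/
def clausePath (sel : Fin m → Fin 3) : List (RNode n m) :=
  weave (Fin.cons (.w 0) .z)
      (fun j => [.y j, .u j (sel j) (Cl j (sel j)).2, .v j (sel j) (Cl j (sel j)).2]) ++
    [.w (Fin.last n)]

variable {sel : Fin m → Fin 3}

theorem pathArcs_clausePath :
    pathArcs (clausePath Cl sel) =
      (finRange m).flatMap (fun j =>
        [((Fin.cons (.w 0) .z : Fin (m + 1) → RNode n m) j.castSucc, .y j),
          (.y j, .u j (sel j) (Cl j (sel j)).2),
          (.u j (sel j) (Cl j (sel j)).2, .v j (sel j) (Cl j (sel j)).2),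
          (.v j (sel j) (Cl j (sel j)).2, .z j)]) ++
      [((Fin.cons (.w 0) .z : Fin (m + 1) → RNode n m) (Fin.last m), .w (Fin.last n))] := by
  rw [clausePath, pathArcs, zip_tail_concat (getLast?_weave _ _), zip_tail_weave]
  simp [Fin.cons_succ]

theorem isChain_clausePath (hm : 0 < m) : List.IsChain (RArc Cl) (clausePath Cl sel) := by
  rw [isChain_iff_forall_mem_zip_tail, ← pathArcs, pathArcs_clausePath]
  simp only [mem_append, mem_flatMap, mem_cons, Prod.mk.injEq, not_mem_nil, or_false,
    mem_finRange, true_and]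
  rintro a b (⟨j, ⟨rfl, rfl⟩ | ⟨rfl, rfl⟩ | ⟨rfl, rfl⟩ | ⟨rfl, rfl⟩⟩ | ⟨rfl, rfl⟩)
  · rcases j with ⟨_ | k, hk⟩
    · exact RArc.sy _ rfl
    · exact RArc.zy ⟨k, by omega⟩ _ rfl
  · exact RArc.yu j (sel j)
  · exact RArc.seg j (sel j) _
  · exact RArc.vz j (sel j)
  · obtain ⟨m, rfl⟩ := Nat.exists_eq_add_of_lt hm
    simpa [← Fin.succ_last] using RArc.zf (Cl := Cl) (Fin.last _) rfl

theorem rPathCost_clausePath : rPathCost (clausePath Cl sel) = 0 := by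
  have hy (x : RNode n m) (j : Fin m) : rcost (x, .y j) = 0 := by cases x <;> rfl
  have hf (k : Fin (m + 1)) :
      rcost ((Fin.cons (.w 0) .z : Fin (m + 1) → RNode n m) k, .w (Fin.last n)) = 0 := by
    cases k using Fin.cases <;> rfl
  refine sum_eq_zero_iff.2 fun c hc => ?_
  obtain ⟨e, he, rfl⟩ := mem_map.1 hc
  simp only [pathArcs_clausePath, mem_append, mem_flatMap, mem_cons, not_mem_nil, or_false,
    mem_finRange, true_and] at he
  rcases he with ⟨j, rfl | rfl | rfl | rfl⟩ | rfl
  exacts [hy _ _, rfl, rfl, rfl, hf _]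

theorem nodup_clausePath (hn : 0 < n) : (clausePath Cl sel).Nodup := by
  have hsep (k : Fin (m + 1)) : (Fin.cons (.w 0) .z : Fin (m + 1) → RNode n m) k = .w 0 ∨
      ∃ j, (Fin.cons (.w 0) .z : Fin (m + 1) → RNode n m) k = .z j := by
    cases k using Fin.cases <;> simp
  rw [clausePath, nodup_append]
  refine ⟨nodup_weave _ _ ?_ (fun j => by simp) ?_ ?_, nodup_singleton _, ?_⟩
  · exact Fin.cons_injective_iff.2 ⟨by simp, fun _ _ h => RNode.z.inj h⟩
  · intro j j' h
    simp [Ne.symm h]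
  · intro k j
    rcases hsep k with h | ⟨j', h⟩ <;> simp [h]
  · intro a ha b hb
    rw [mem_singleton] at hb
    subst hb
    rcases (mem_weave _ _).1 ha with ⟨k, rfl⟩ | ⟨j, hj⟩
    · rcases hsep k with h | ⟨j', h⟩ <;> simp [h, Fin.ext_iff]
      omega
    · simp only [mem_cons, not_mem_nil, or_false] at hj
      rcases hj with rfl | rfl | rfl <;> simp

theorem isSFPath_clausePath (hn : 0 < n) (hm : 0 < m) : IsSFPath Cl (clausePath Cl sel) := by
  refine ⟨isChain_clausePath hm, ?_, by simp [clausePath], nodup_clausePath hn⟩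
  rw [clausePath, head?_append, head?_weave]
  rfl

theorem side_eq_of_mem_pathArcs_lobePath {τ : Fin n → Bool} {j : Fin m} {t : Fin 3} {b : Bool}
    (h : (RNode.u j t b, RNode.v j t b) ∈ pathArcs (lobePath Cl τ)) : b = !τ (Cl j t).1 := by
  simpa using (mem_lobePath τ).1 (of_mem_zip h).1

theorem mem_pathArcs_clausePath (j : Fin m) :
    (RNode.u j (sel j) (Cl j (sel j)).2, RNode.v j (sel j) (Cl j (sel j)).2) ∈
      pathArcs (clausePath Cl sel) := by
  simp [pathArcs_clausePath]

/-- `P_1` avoids the clause nodes and the segments of satisfied literals, while every arc of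
`P_2` touches a clause node or is such a segment. -/
theorem disjoint_pathArcs_lobePath_clausePath (hm : 0 < m) {τ : Fin n → Bool}
    (hsel : ∀ j, (Cl j (sel j)).2 = τ (Cl j (sel j)).1) :
    (pathArcs (lobePath Cl τ)).Disjoint (pathArcs (clausePath Cl sel)) := by
  rintro ⟨a, b⟩ h1 h2
  obtain ⟨ha, hb⟩ := of_mem_zip h1
  rw [mem_lobePath] at ha
  replace hb := (mem_lobePath τ).1 (mem_of_mem_tail hb)
  simp only [pathArcs_clausePath, mem_append, mem_flatMap, mem_cons, Prod.mk.injEq, not_mem_nil,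
    or_false, mem_finRange, true_and] at h2
  rcases h2 with ⟨j, ⟨-, rfl⟩ | ⟨rfl, -⟩ | ⟨rfl, -⟩ | ⟨-, rfl⟩⟩ | ⟨rfl, -⟩
  · simp at hb
  · simp at ha
  · simp [hsel] at ha
  · simp at hb
  · obtain ⟨m, rfl⟩ := Nat.exists_eq_add_of_lt hm
    simp [← Fin.succ_last] at ha

end ReductionGraph

open ReductionGraph in
/-- if the 3-SAT formula `F = F_1 ∧ … ∧ F_m` (clause `j`, slot
`t` holding literal `Cl j t = (variable, polarity)`) is satisfied by the
assignment `τ`, then the reduction graph contains two arc-disjoint s-f paths: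
`L1` of cost `3m + n`, traversing in each lobe exactly the side opposite to
the satisfied literals (lower side iff `τ` is true, i.e. side `!(τ i)`), and
`L2` of cost `0`, traversing the clause arcs and, for each clause, the segment
of a satisfied literal; their total cost is `3m + n`. -/
theorem stmt14 (n m : ℕ) (hm : 0 < m)
    (Cl : Fin m → Fin 3 → Fin n × Bool)
    (hocc : ∀ i : Fin n, ∃ j t, (Cl j t).1 = i)
    (τ : Fin n → Bool)
    (hsat : ∀ j : Fin m, ∃ t : Fin 3, (Cl j t).2 = τ (Cl j t).1) :
    ∃ L1 L2 : List (RNode n m),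
      IsSFPath Cl L1 ∧ IsSFPath Cl L2 ∧
      (pathArcs L1).Disjoint (pathArcs L2) ∧
      rPathCost L1 = 3 * m + n ∧ rPathCost L2 = 0 ∧
      (∀ (j : Fin m) (t : Fin 3) (b : Bool),
        (RNode.u j t b, RNode.v j t b) ∈ pathArcs L1 → b = !(τ (Cl j t).1)) ∧
      (∀ j : Fin m, ∃ t : Fin 3, (Cl j t).2 = τ (Cl j t).1 ∧
        (RNode.u j t (Cl j t).2, RNode.v j t (Cl j t).2) ∈ pathArcs L2) := by
  have hn : 0 < n := (Cl ⟨0, hm⟩ 0).1.pos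
  choose sel hsel using hsat
  exact ⟨lobePath Cl τ, clausePath Cl sel, isSFPath_lobePath hocc τ, isSFPath_clausePath hn hm,
    disjoint_pathArcs_lobePath_clausePath hm hsel, rPathCost_lobePath hocc τ,
    rPathCost_clausePath, fun _ _ _ => side_eq_of_mem_pathArcs_lobePath,
    fun j => ⟨sel j, hsel j, mem_pathArcs_clausePath j⟩⟩
end

section
/- Conversely, in the 3-SAT reduction graph of Theorem 1, if there exist an s-f path P_1 of cost 3m + n traversing one side of every lobe and an arc-disjoint s-f path P_2 of cost 0, then the assignment τ defined by τ(x_i) = true iff P_1 traverses the lower part of lobe i satisfies every clause of F; hence F is satisfiable. -/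
/-!
A path of cost `0` can use no lobe arc (`w → u`, `v → u`, `v → w`). Leaving `s` it must
therefore go to `y 0`; from each `y j` it enters the segment `u → v` of some literal of clause
`j`, on the lobe side matching that literal's polarity, and must return to `z j`, from where it
moves on to `y (j + 1)` or to `f`. So for every clause the zero-cost path `L2` uses a literal
segment on side `(Cl j t).2`. Since `L1` uses every segment on side `σ`, arc-disjointness forces
`(Cl j t).2 ≠ σ (Cl j t).1`: the literal is true under `τ = !σ`.
-/

namespace List

variable {α : Type*} {l : List α} {a b : α}

theorem IsChain.rel_of_mem_zip_tail {R : α → α → Prop} (hl : l.IsChain R)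
    (h : (a, b) ∈ l.zip l.tail) : R a b := by
  induction l with
  | nil => simp at h
  | cons x l ih =>
    cases l with
    | nil => simp at h
    | cons y l =>
      rw [isChain_cons_cons] at hl
      rw [tail_cons, zip_cons_cons, mem_cons, Prod.mk.injEq] at h
      rcases h with ⟨rfl, rfl⟩ | h
      · exact hl.1
      · exact ih hl.2 h

theorem mem_of_mem_zip_tail_right (h : (a, b) ∈ l.zip l.tail) : b ∈ l :=
  mem_of_mem_tail (of_mem_zip h).2

theorem exists_mem_zip_tail_of_ne_getLast (ha : a ∈ l) (hb : l.getLast? = some b)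
    (hne : a ≠ b) : ∃ c, (a, c) ∈ l.zip l.tail := by
  induction l with
  | nil => simp at ha
  | cons x l ih =>
    cases l with
    | nil => simp_all
    | cons y l =>
      rcases mem_cons.1 ha with rfl | ha
      · exact ⟨y, by simp⟩
      · obtain ⟨c, hc⟩ := ih ha (by simpa [getLast?_cons_cons] using hb)
        exact ⟨c, mem_cons_of_mem _ hc⟩

end List

variable {n m : ℕ} {Cl : Fin m → Fin 3 → Fin n × Bool}

namespace RArc

theorem exists_eq_u_of_y {j : Fin m} {c : RNode n m} (h : RArc Cl (.y j) c) :
    ∃ t, c = .u j t (Cl j t).2 := by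
  cases h with
  | yu _ t => exact ⟨t, rfl⟩

theorem eq_v_of_u {j : Fin m} {t : Fin 3} {b : Bool} {c : RNode n m}
    (h : RArc Cl (.u j t b) c) : c = .v j t b := by
  cases h
  rfl

theorem eq_z_of_v_of_rcost_eq_zero {j : Fin m} {t : Fin 3} {b : Bool} {c : RNode n m}
    (h : RArc Cl (.v j t b) c) (hc : rcost (.v j t b, c) = 0) :
    b = (Cl j t).2 ∧ c = .z j := by
  cases h with
  | chain => simp [rcost] at hc
  | exits => simp [rcost] at hc
  | vz => exact ⟨rfl, rfl⟩

theorem exists_eq_y_of_w_zero_of_rcost_eq_zero {c : RNode n m} (h : RArc Cl (.w 0) c)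
    (hc : rcost (.w 0, c) = 0) : ∃ j : Fin m, (j : ℕ) = 0 ∧ c = .y j := by
  generalize hs : (RNode.w 0 : RNode n m) = s at h hc
  cases h <;> simp_all [rcost]

theorem of_z {j : Fin m} {c : RNode n m} (h : RArc Cl (.z j) c) :
    (∃ j' : Fin m, (j' : ℕ) = j + 1 ∧ c = .y j') ∨ ((j : ℕ) = m - 1 ∧ c = .w (Fin.last n)) := by
  cases h with
  | zy _ j' hj' => exact .inl ⟨j', hj', rfl⟩
  | zf _ hj => exact .inr ⟨hj, rfl⟩

end RArc

theorem rcost_eq_zero_of_mem_pathArcs {L : List (RNode n m)} (hL : rPathCost L = 0)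
    {p : RNode n m × RNode n m} (hp : p ∈ pathArcs L) : rcost p = 0 :=
  List.sum_eq_zero_iff.1 hL _ (List.mem_map_of_mem hp)

namespace IsSFPath

variable {L : List (RNode n m)}

theorem exists_arc_of_ne_last (hL : IsSFPath Cl L) {a : RNode n m} (ha : a ∈ L)
    (hne : a ≠ .w (Fin.last n)) : ∃ c, RArc Cl a c ∧ (a, c) ∈ pathArcs L ∧ c ∈ L := by
  obtain ⟨c, hc⟩ := List.exists_mem_zip_tail_of_ne_getLast ha hL.2.2.1 hne
  exact ⟨c, List.IsChain.rel_of_mem_zip_tail hL.1 hc, hc, List.mem_of_mem_zip_tail_right hc⟩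

variable (hL : IsSFPath Cl L) (hc : rPathCost L = 0)
include hL hc

theorem exists_literal_arc_of_y_mem {j : Fin m} (hy : .y j ∈ L) :
    (∃ t, (RNode.u j t (Cl j t).2, RNode.v j t (Cl j t).2) ∈ pathArcs L) ∧ .z j ∈ L := by
  obtain ⟨c, hyc, -, hcL⟩ := hL.exists_arc_of_ne_last hy (by simp)
  obtain ⟨t, rfl⟩ := hyc.exists_eq_u_of_y
  obtain ⟨c', huc, hseg, hc'L⟩ := hL.exists_arc_of_ne_last hcL (by simp)
  obtain rfl := huc.eq_v_of_u
  obtain ⟨c'', hvc, hout, hc''L⟩ := hL.exists_arc_of_ne_last hc'L (by simp)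
  obtain ⟨-, rfl⟩ := hvc.eq_z_of_v_of_rcost_eq_zero (rcost_eq_zero_of_mem_pathArcs hc hout)
  exact ⟨⟨t, hseg⟩, hc''L⟩

theorem y_mem (hn : 0 < n) (j : Fin m) : .y j ∈ L := by
  obtain ⟨j, hj⟩ := j
  induction j with
  | zero =>
    have hs : .w 0 ∈ L := List.mem_of_mem_head? hL.2.1
    obtain ⟨c, hsc, hout, hcL⟩ :=
      hL.exists_arc_of_ne_last hs (by simp [Fin.ext_iff]; omega)
    obtain ⟨j₀, hj₀, rfl⟩ :=
      hsc.exists_eq_y_of_w_zero_of_rcost_eq_zero (rcost_eq_zero_of_mem_pathArcs hc hout)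
    rwa [show j₀ = ⟨0, hj⟩ from Fin.ext hj₀] at hcL
  | succ k ih =>
    have hz := (hL.exists_literal_arc_of_y_mem hc (ih (by omega))).2
    obtain ⟨c, hzc, -, hcL⟩ := hL.exists_arc_of_ne_last hz (by simp)
    rcases hzc.of_z with ⟨j', hj', rfl⟩ | ⟨hlast, -⟩
    · rwa [show j' = ⟨k + 1, hj⟩ from Fin.ext hj'] at hcL
    · simp only at hlast
      omega

end IsSFPath

theorem stmt15_general (n m : ℕ)
    (Cl : Fin m → Fin 3 → Fin n × Bool)
    (L1 L2 : List (RNode n m)) (σ : Fin n → Bool)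
    (hL2 : IsSFPath Cl L2)
    (hdisj : (pathArcs L1).Disjoint (pathArcs L2))
    (hc2 : rPathCost L2 = 0)
    (hside : ∀ (j : Fin m) (t : Fin 3),
      (RNode.u j t (σ (Cl j t).1), RNode.v j t (σ (Cl j t).1)) ∈ pathArcs L1) :
    ∀ j : Fin m, ∃ t : Fin 3, (Cl j t).2 = !(σ (Cl j t).1) := by
  intro j
  have hn : 0 < n := Fin.pos (Cl j 0).1
  obtain ⟨t, hlit⟩ := (hL2.exists_literal_arc_of_y_mem hc2 (hL2.y_mem hc2 hn j)).1
  refine ⟨t, Bool.eq_not_iff.2 fun hσ => hdisj ?_ hlit⟩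
  simpa [hσ] using hside j t

/-- converse direction of Theorem 1: in the reduction graph,
suppose `L1` is an s-f path of cost `3m + n` traversing one side of every lobe
(`σ i` being the side used in lobe `i`, so every occurrence segment of
variable `i` on side `σ i` lies on `L1`), and `L2` is an arc-disjoint s-f path
of cost `0`.  Then the assignment `τ(x_i) = true` iff `L1` traverses the lower
part of lobe `i` — i.e. `τ i = !(σ i)` — satisfies every clause of `F`; hence
`F` is satisfiable. -/
theorem stmt15 (n m : ℕ) (hm : 0 < m)
    (Cl : Fin m → Fin 3 → Fin n × Bool)
    (hocc : ∀ i : Fin n, ∃ j t, (Cl j t).1 = i)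
    (L1 L2 : List (RNode n m)) (σ : Fin n → Bool)
    (hL1 : IsSFPath Cl L1) (hL2 : IsSFPath Cl L2)
    (hdisj : (pathArcs L1).Disjoint (pathArcs L2))
    (hc1 : rPathCost L1 = 3 * m + n) (hc2 : rPathCost L2 = 0)
    (hside : ∀ (j : Fin m) (t : Fin 3),
      (RNode.u j t (σ (Cl j t).1), RNode.v j t (σ (Cl j t).1)) ∈ pathArcs L1) :
    ∀ j : Fin m, ∃ t : Fin 3, (Cl j t).2 = !(σ (Cl j t).1) :=
  stmt15_general n m Cl L1 L2 σ hL2 hdisj hc2 hside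
end
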